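/- For independent truncated-exponential random variables t₁,…,t_r each with density exp(ν − t)·1{t ≥ ν}, and constants γ ≥ 1, ρ > 0 with ν ≤ γ/ρ, the probability θ_{r,k} that t_j ≥ γ(1/ρ + Σ_{i=j+1}^r t_i) holds simultaneously for all j = 1,…,k equals exp(rν − (r−k)ν(1+γ)^k − (γ/ρ)·Σ_{i=1}^k (1+γ)^{i−1}) / (1+γ)^{r(k) } where the denominator exponent is r·k − k(k+1)/2, i.e. θ_{r,k} = exp(rν − (r−k)ν·(1+γ)^k − ρ^{−1}((1+γ)^k − 1)) · (1+γ)^{−(rk − k(k+1)/2)}. -/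

import Mathlib

/-!
Peel off the first coordinate. Given t₂,…,t_r (all ≥ ν almost surely), the first constraint
reads t₁ ≥ L := γ(ρ⁻¹ + t₂ + ⋯ + t_r), and L ≥ ν, so the integral over t₁ of the density
against an exponential tilt e^{(1-a)t₁} is e^{ν-aL}/a. The factor e^{-aγ(t₂+⋯+t_r)} it leaves
behind is again an exponential tilt, of the remaining coordinates, with rate a(1+γ). Inducting on
the tilted probability therefore gives, after k steps, a product of k explicit factors times
(e^{(1-a(1+γ)^k)ν}/(a(1+γ)^k))^{r-k} from the r-k unconstrained coordinates; at a = 1 this is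
the stated closed form, via the geometric sum Σ_{i<k} γ(1+γ)^i = (1+γ)^k - 1.
-/

open MeasureTheory Real Set ENNReal

noncomputable def truncExp (ν : ℝ) : Measure ℝ :=
  volume.withDensity (fun t => ENNReal.ofReal (if ν ≤ t then Real.exp (ν - t) else 0))

theorem lintegral_pi_fin_succ {α : Type*} [MeasurableSpace α] (μ : Measure α) [SigmaFinite μ]
    {n : ℕ} {f : (Fin (n + 1) → α) → ℝ≥0∞} (hf : Measurable f) :
    ∫⁻ t, f t ∂Measure.pi (fun _ => μ) =
      ∫⁻ y, ∫⁻ x, f (Fin.cons x y) ∂μ ∂Measure.pi (fun _ => μ) := by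
  set e := MeasurableEquiv.piFinSuccAbove (fun _ : Fin (n + 1) => α) 0
  rw [← (measurePreserving_piFinSuccAbove (fun _ => μ) 0).symm.lintegral_comp hf,
    lintegral_prod_symm' (fun p => f (e.symm p)) (hf.comp e.symm.measurable)]
  simp only [e, MeasurableEquiv.piFinSuccAbove_symm_apply, Fin.insertNthEquiv, Equiv.coe_fn_mk,
    Fin.insertNth_zero']

theorem truncExp_Iio (ν : ℝ) : truncExp ν (Iio ν) = 0 := by
  rw [truncExp, withDensity_apply _ measurableSet_Iio]
  exact setLIntegral_eq_zero measurableSet_Iio fun x (hx : x < ν) => by simp [hx.not_ge]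

theorem ae_truncExp_le (ν : ℝ) : ∀ᵐ x ∂truncExp ν, ν ≤ x :=
  ae_iff.2 (by simp only [not_le]; exact truncExp_Iio ν)

theorem setLIntegral_truncExp_exp {ν a L : ℝ} (ha : 0 < a) (hL : ν ≤ L) :
    ∫⁻ x in Ici L, ENNReal.ofReal (exp ((1 - a) * x)) ∂truncExp ν =
      ENNReal.ofReal (exp (ν - a * L) / a) := by
  have hdens : ∀ x ∈ Ici L, ENNReal.ofReal (if ν ≤ x then exp (ν - x) else 0) *
      ENNReal.ofReal (exp ((1 - a) * x)) = ENNReal.ofReal (exp ν * exp (-a * x)) := by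
    intro x (hx : L ≤ x)
    rw [if_pos (hL.trans hx), ← ENNReal.ofReal_mul (exp_nonneg _), ← exp_add, ← exp_add]
    ring_nf
  rw [truncExp, setLIntegral_withDensity_eq_setLIntegral_mul _
      (Measurable.ite measurableSet_Ici (by fun_prop) measurable_const).ennreal_ofReal (by fun_prop)
      measurableSet_Ici]
  simp only [Pi.mul_apply]
  rw [setLIntegral_congr_fun measurableSet_Ici hdens,
    Measure.restrict_congr_set Ioi_ae_eq_Ici.symm,
    ← ofReal_integral_eq_lintegral_ofReal
      ((integrableOn_exp_mul_Ioi (neg_lt_zero.2 ha) L).const_mul _)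
      (ae_of_all _ fun _ => by positivity),
    integral_const_mul, integral_exp_mul_Ioi (neg_lt_zero.2 ha)]
  congr 1
  rw [sub_eq_add_neg, exp_add]
  field_simp

theorem lintegral_truncExp_exp {ν a : ℝ} (ha : 0 < a) :
    ∫⁻ x, ENNReal.ofReal (exp ((1 - a) * x)) ∂truncExp ν =
      ENNReal.ofReal (exp ((1 - a) * ν) / a) := by
  rw [← Measure.restrict_eq_self_of_ae_mem (s := Ici ν) (ae_truncExp_le ν),
    setLIntegral_truncExp_exp ha le_rfl]
  ring_nf

instance (ν : ℝ) : IsProbabilityMeasure (truncExp ν) where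
  measure_univ := by simpa using lintegral_truncExp_exp (ν := ν) one_pos

def decodingEvent (γ ρ : ℝ) (n k : ℕ) : Set (Fin n → ℝ) :=
  {t | ∀ j : Fin n, (j : ℕ) < k → t j ≥ γ * (ρ⁻¹ + ∑ i : Fin n, if j < i then t i else 0)}

theorem measurableSet_decodingEvent (γ ρ : ℝ) (n k : ℕ) :
    MeasurableSet (decodingEvent γ ρ n k) := by
  simp only [decodingEvent, ofPred_forall]
  refine .iInter fun j => .iInter fun _ => measurableSet_le ?_ (measurable_pi_apply j)
  refine measurable_const.mul (measurable_const.add (Finset.measurable_sum _ fun i _ => ?_))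
  split_ifs <;> fun_prop

theorem decodingEvent_zero (γ ρ : ℝ) (n : ℕ) : decodingEvent γ ρ n 0 = univ := by
  simp [decodingEvent]

theorem cons_mem_decodingEvent_succ {γ ρ x : ℝ} {n k : ℕ} {y : Fin n → ℝ} :
    (Fin.cons x y : Fin (n + 1) → ℝ) ∈ decodingEvent γ ρ (n + 1) (k + 1) ↔
      γ * (ρ⁻¹ + ∑ i, y i) ≤ x ∧ y ∈ decodingEvent γ ρ n k := by
  simp [decodingEvent, Fin.forall_fin_succ, Fin.sum_univ_succ, Fin.succ_pos]

noncomputable def expTilt {n : ℕ} (a : ℝ) (t : Fin n → ℝ) : ℝ≥0∞ :=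
  ENNReal.ofReal (exp ((1 - a) * ∑ i, t i))

@[fun_prop]
theorem measurable_expTilt (n : ℕ) (a : ℝ) : Measurable (expTilt (n := n) a) := by
  unfold expTilt
  fun_prop

theorem expTilt_cons {n : ℕ} (a x : ℝ) (y : Fin n → ℝ) :
    expTilt a (Fin.cons x y : Fin (n + 1) → ℝ) =
      ENNReal.ofReal (exp ((1 - a) * x)) * expTilt a y := by
  rw [expTilt, expTilt, Fin.sum_cons, mul_add, exp_add, ENNReal.ofReal_mul (exp_nonneg _)]

theorem lintegral_pi_truncExp_expTilt {ν a : ℝ} (ha : 0 < a) (n : ℕ) :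
    ∫⁻ t, expTilt a t ∂Measure.pi (fun _ : Fin n => truncExp ν) =
      ENNReal.ofReal (exp ((1 - a) * ν) / a) ^ n := by
  induction n with
  | zero => simp [expTilt]
  | succ n ih =>
    simp_rw [lintegral_pi_fin_succ _ (measurable_expTilt _ a), expTilt_cons]
    rw [lintegral_congr fun y => lintegral_mul_const _ (by fun_prop), lintegral_truncExp_exp ha,
      lintegral_const_mul _ (by fun_prop), ih, pow_succ']

theorem indicator_decodingEvent_cons {γ ρ a x : ℝ} {n k : ℕ} {y : Fin n → ℝ} :
    (decodingEvent γ ρ (n + 1) (k + 1)).indicator (expTilt a) (Fin.cons x y) =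
      (Ici (γ * (ρ⁻¹ + ∑ i, y i))).indicator (fun x => ENNReal.ofReal (exp ((1 - a) * x))) x *
        (decodingEvent γ ρ n k).indicator (expTilt a) y := by
  by_cases hmem : γ * (ρ⁻¹ + ∑ i, y i) ≤ x ∧ y ∈ decodingEvent γ ρ n k
  · rw [indicator_of_mem (cons_mem_decodingEvent_succ.2 hmem), indicator_of_mem hmem.2,
      indicator_of_mem (show x ∈ Ici _ from hmem.1), expTilt_cons]
  · rw [indicator_of_notMem (mt cons_mem_decodingEvent_succ.1 hmem)]
    rcases not_and_or.1 hmem with hx | hy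
    · rw [indicator_of_notMem (show x ∉ Ici _ from hx), zero_mul]
    · rw [indicator_of_notMem hy, mul_zero]

theorem lintegral_indicator_decodingEvent_cons {ν γ ρ a : ℝ} (hν : 0 ≤ ν) (hγ : 0 ≤ γ)
    (hνγ : ν ≤ γ / ρ) (ha : 0 < a) {n k : ℕ} {y : Fin n → ℝ} (hy : ∀ i, ν ≤ y i) :
    ∫⁻ x, (decodingEvent γ ρ (n + 1) (k + 1)).indicator (expTilt a) (Fin.cons x y) ∂truncExp ν =
      ENNReal.ofReal (exp (ν - a * (γ * ρ⁻¹)) / a) *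
        (decodingEvent γ ρ n k).indicator (expTilt (a * (1 + γ))) y := by
  have hL : ν ≤ γ * (ρ⁻¹ + ∑ i, y i) := by
    have : 0 ≤ ∑ i, y i := Finset.sum_nonneg fun i _ => hν.trans (hy i)
    rw [div_eq_mul_inv] at hνγ
    nlinarith
  simp_rw [indicator_decodingEvent_cons]
  rw [lintegral_mul_const _ ((by fun_prop : Measurable _).indicator measurableSet_Ici),
    lintegral_indicator measurableSet_Ici, setLIntegral_truncExp_exp ha hL]
  by_cases hyE : y ∈ decodingEvent γ ρ n k
  · rw [indicator_of_mem hyE, indicator_of_mem hyE, expTilt, expTilt,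
      ← ENNReal.ofReal_mul (by positivity), ← ENNReal.ofReal_mul (by positivity),
      div_mul_eq_mul_div, div_mul_eq_mul_div, ← exp_add, ← exp_add]
    ring_nf
  · simp [indicator_of_notMem hyE]

noncomputable def tiltedDecodingProb (ν γ ρ a : ℝ) (n k : ℕ) : ℝ≥0∞ :=
  ∫⁻ t in decodingEvent γ ρ n k, expTilt a t ∂Measure.pi (fun _ => truncExp ν)

theorem tiltedDecodingProb_one (ν γ ρ : ℝ) (n k : ℕ) :
    tiltedDecodingProb ν γ ρ 1 n k =
      Measure.pi (fun _ => truncExp ν) (decodingEvent γ ρ n k) := by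
  simp [tiltedDecodingProb, expTilt]

theorem tiltedDecodingProb_zero {ν γ ρ a : ℝ} (ha : 0 < a) (n : ℕ) :
    tiltedDecodingProb ν γ ρ a n 0 = ENNReal.ofReal (exp ((1 - a) * ν) / a) ^ n := by
  rw [tiltedDecodingProb, decodingEvent_zero, Measure.restrict_univ,
    lintegral_pi_truncExp_expTilt ha]

theorem tiltedDecodingProb_succ_succ {ν γ ρ a : ℝ} (hν : 0 ≤ ν) (hγ : 0 ≤ γ) (hνγ : ν ≤ γ / ρ)
    (ha : 0 < a) (n k : ℕ) :
    tiltedDecodingProb ν γ ρ a (n + 1) (k + 1) =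
      ENNReal.ofReal (exp (ν - a * (γ * ρ⁻¹)) / a) *
        tiltedDecodingProb ν γ ρ (a * (1 + γ)) n k := by
  have hae : ∀ᵐ y ∂Measure.pi (fun _ : Fin n => truncExp ν), ∀ i, ν ≤ y i :=
    ae_all_iff.2 fun _ => Measure.tendsto_eval_ae_ae.eventually (ae_truncExp_le ν)
  have hmeas (m j : ℕ) (b : ℝ) : Measurable ((decodingEvent γ ρ m j).indicator (expTilt b)) :=
    (measurable_expTilt m b).indicator (measurableSet_decodingEvent ..)
  simp only [tiltedDecodingProb, ← lintegral_indicator (measurableSet_decodingEvent ..)]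
  rw [lintegral_pi_fin_succ _ (hmeas ..), ← lintegral_const_mul _ (hmeas ..)]
  exact lintegral_congr_ae (hae.mono fun y hy =>
    lintegral_indicator_decodingEvent_cons hν hγ hνγ ha hy)

theorem tiltedDecodingProb_eq_prod {ν γ ρ : ℝ} (hν : 0 ≤ ν) (hγ : 0 ≤ γ) (hνγ : ν ≤ γ / ρ)
    (k m : ℕ) {a : ℝ} (ha : 0 < a) :
    tiltedDecodingProb ν γ ρ a (k + m) k =
      (∏ i ∈ Finset.range k,
          ENNReal.ofReal (exp (ν - a * (1 + γ) ^ i * (γ * ρ⁻¹)) / (a * (1 + γ) ^ i))) *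
        ENNReal.ofReal (exp ((1 - a * (1 + γ) ^ k) * ν) / (a * (1 + γ) ^ k)) ^ m := by
  induction k generalizing a with
  | zero => simp [tiltedDecodingProb_zero ha]
  | succ k ih =>
    rw [show k + 1 + m = k + m + 1 by omega, tiltedDecodingProb_succ_succ hν hγ hνγ ha,
      ih (by positivity), Finset.prod_range_succ']
    simp only [mul_assoc, ← pow_succ', pow_zero, mul_one]
    ring

theorem prod_exp_div_pow_eq (ν γ ρ : ℝ) {r k : ℕ} (hkr : k ≤ r) :
    (∏ i ∈ Finset.range k, exp (ν - (1 + γ) ^ i * (γ * ρ⁻¹)) / (1 + γ) ^ i) *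
        (exp ((1 - (1 + γ) ^ k) * ν) / (1 + γ) ^ k) ^ (r - k) =
      exp ((r : ℝ) * ν - ((r : ℝ) - (k : ℝ)) * ν * (1 + γ) ^ k - ρ⁻¹ * ((1 + γ) ^ k - 1)) /
        (1 + γ) ^ (r * k - k * (k + 1) / 2) := by
  have hgeom : (∑ i ∈ Finset.range k, (1 + γ) ^ i) * γ = (1 + γ) ^ k - 1 := by
    simpa using geom_sum_mul (1 + γ) k
  have hexponent : ∑ i ∈ Finset.range k, i + k * (r - k) = r * k - k * (k + 1) / 2 := by
    have hgauss : (∑ i ∈ Finset.range k, i) * 2 + k = k * k := by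
      have := Finset.sum_range_id_mul_two (k + 1)
      rw [Finset.sum_range_succ, Nat.add_sub_cancel] at this
      linarith
    have htri : k * (k + 1) / 2 = ∑ i ∈ Finset.range k, i + k :=
      Nat.div_eq_of_eq_mul_left two_pos (by linarith)
    have hrk : r * k = k * (r - k) + k * k := by
      rw [← Nat.mul_add, Nat.sub_add_cancel hkr, Nat.mul_comm]
    omega
  rw [Finset.prod_div_distrib, ← exp_sum, Finset.prod_pow_eq_pow_sum, div_pow, ← exp_nat_mul,
    ← pow_mul, div_mul_div_comm, ← exp_add, ← pow_add, hexponent]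
  congr 2
  rw [Finset.sum_sub_distrib, Finset.sum_const, Finset.card_range, nsmul_eq_mul, ← Finset.sum_mul,
    Nat.cast_sub hkr]
  linear_combination (-ρ⁻¹) * hgeom

theorem stmt_2_general (r k : ℕ) (hkr : k ≤ r) (ν γ ρ : ℝ)
    (hν : 0 ≤ ν) (hγ : 1 ≤ γ) (hνγ : ν ≤ γ / ρ) :
    (Measure.pi (fun _ : Fin r => truncExp ν))
      {t | ∀ j : Fin r, (j : ℕ) < k →
        t j ≥ γ * (ρ⁻¹ + ∑ i : Fin r, if j < i then t i else 0)} =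
    ENNReal.ofReal
      (Real.exp ((r : ℝ) * ν - ((r : ℝ) - (k : ℝ)) * ν * (1 + γ) ^ k
          - ρ⁻¹ * ((1 + γ) ^ k - 1)) /
        (1 + γ) ^ (r * k - k * (k + 1) / 2)) := by
  have hprod := tiltedDecodingProb_eq_prod hν (by linarith) hνγ k (r - k) one_pos
  rw [Nat.add_sub_cancel' hkr, tiltedDecodingProb_one] at hprod
  change Measure.pi _ (decodingEvent γ ρ r k) = _
  simp only [hprod, one_mul]
  rw [← ENNReal.ofReal_prod_of_nonneg fun i _ => by positivity,
    ← ENNReal.ofReal_pow (by positivity), ← ENNReal.ofReal_mul (by positivity),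
    prod_exp_div_pow_eq ν γ ρ hkr]

/-- Theorem 1 (joint decoding probability θ_{r,k}): for i.i.d. truncated-exponential
t₁,…,t_r with threshold ν, γ ≥ 1, ρ > 0, ν ≤ γ/ρ, the probability that
t_j ≥ γ(ρ⁻¹ + Σ_{i>j} t_i) for all j = 1,…,k equals
exp(rν − (r−k)ν(1+γ)^k − ρ⁻¹((1+γ)^k − 1)) / (1+γ)^(rk − k(k+1)/2). -/
theorem stmt_2 (r k : ℕ) (hk : 1 ≤ k) (hkr : k ≤ r) (ν γ ρ : ℝ)
    (hν : 0 ≤ ν) (hγ : 1 ≤ γ) (hρ : 0 < ρ) (hνγ : ν ≤ γ / ρ) :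
    (Measure.pi (fun _ : Fin r => truncExp ν))
      {t | ∀ j : Fin r, (j : ℕ) < k →
        t j ≥ γ * (ρ⁻¹ + ∑ i : Fin r, if j < i then t i else 0)} =
    ENNReal.ofReal
      (Real.exp ((r : ℝ) * ν - ((r : ℝ) - (k : ℝ)) * ν * (1 + γ) ^ k
          - ρ⁻¹ * ((1 + γ) ^ k - 1)) /
        (1 + γ) ^ (r * k - k * (k + 1) / 2)) :=
  stmt_2_general r k hkr ν γ ρ hν hγ hνγ
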